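/- Let n ≥ 2 be an even integer, and let G be the 4-graph on 2n vertices whose vertex set is the disjoint union of sets A and B with |A| = |B| = n, and whose edges are all 4-element vertex sets intersecting A in exactly two vertices. Then for every real p ≥ 2, λ_min^(p)(G) ≤ −12 n · C(n,2) / (2n)^{4/p}, where C(n,2) = n(n−1)/2. -/

import Mathlib

open Finset

/-- Polynomial form of a weighted `r`-graph with edge set `E` and weights `w`:
`P(x) = r! * ∑_{e ∈ E} w(e) * ∏_{i ∈ e} x i`. -/
noncomputable def polyForm (r : ℕ) {V : Type*} (E : Finset (Finset V))
    (w : Finset V → ℝ) (x : V → ℝ) : ℝ :=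
  (r.factorial : ℝ) * ∑ e ∈ E, w e * ∏ i ∈ e, x i

/-- The ℓ^p norm of a vector. -/
noncomputable def lpNorm (p : ℝ) {V : Type*} [Fintype V] (x : V → ℝ) : ℝ :=
  (∑ i, |x i| ^ p) ^ (1 / p)

/-- `λ^(p)(G_w)`: the maximum of the polynomial form over the unit ℓ^p sphere. -/
noncomputable def lamMax (r : ℕ) (p : ℝ) {V : Type*} [Fintype V]
    (E : Finset (Finset V)) (w : Finset V → ℝ) : ℝ :=
  sSup {t | ∃ x : V → ℝ, lpNorm p x = 1 ∧ polyForm r E w x = t}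

/-- `λ_min^(p)(G_w)`: the minimum of the polynomial form over the unit ℓ^p sphere. -/
noncomputable def lamMin (r : ℕ) (p : ℝ) {V : Type*} [Fintype V]
    (E : Finset (Finset V)) (w : Finset V → ℝ) : ℝ :=
  sInf {t | ∃ x : V → ℝ, lpNorm p x = 1 ∧ polyForm r E w x = t}

/-- Edge set of the complete `r`-graph `K_k^r` on vertex set `Fin k`. -/
def completeEdges (r k : ℕ) : Finset (Finset (Fin k)) :=
  Finset.univ.powersetCard r

/-- The `4`-graph of Section 2 of the paper: the vertex set is the disjoint union
`A ⊕ B` of two sets of size `n` (`A` = left copy of `Fin n`, `B` = right copy), and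
the edges are all `4`-element vertex sets intersecting `A` in exactly two vertices. -/
def crossEdges (n : ℕ) : Finset (Finset (Fin n ⊕ Fin n)) :=
  (Finset.univ.powersetCard 4).filter
    (fun e => (e.filter (fun v => v.isLeft = true)).card = 2)

/-! Take `x = c • y` with `y = 1` on `A`, `y_j = (-1)^j` on `B` and `c = (2n)^(-1/p)`, so that
`‖x‖_p = 1`. Since an edge is a pair from `A` together with a pair from `B`, the form factors as
`P(y) = 4! · C(n,2) · e₂(y|_B)`, and `2 e₂(y|_B) = (∑ y_j)² - ∑ y_j² = 0 - n` because `n` is even.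
Hence `P(x) = c⁴ P(y) = -12 n C(n,2) / (2n)^(4/p)`. This value bounds the infimum (`sInf` of a set
unbounded below would be `0`) because every `|x_i| ≤ 1` on the unit sphere, so the form is bounded
below there. -/

theorem Finset.two_mul_sum_powersetCard_two_prod {α : Type*} [DecidableEq α] (s : Finset α)
    (f : α → ℝ) :
    2 * ∑ e ∈ s.powersetCard 2, ∏ i ∈ e, f i = (∑ i ∈ s, f i) ^ 2 - ∑ i ∈ s, f i ^ 2 := by
  induction s using Finset.induction_on with
  | empty => rw [Finset.powersetCard_eq_empty.2 (by simp)]; simp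
  | @insert a s ha ih =>
    have hdisj : Disjoint (s.powersetCard 2) ((s.powersetCard 1).image (insert a)) := by
      refine Finset.disjoint_left.2 fun e he he' => ?_
      obtain ⟨e', -, rfl⟩ := Finset.mem_image.1 he'
      exact ha ((Finset.mem_powersetCard.1 he).1 (Finset.mem_insert_self a e'))
    have hinj : Set.InjOn (insert a) (s.powersetCard 1 : Set (Finset α)) :=
      fun e he e' he' h => by
        rw [Finset.mem_coe, Finset.mem_powersetCard] at he he'
        rw [← Finset.erase_insert fun h' => ha (he.1 h'), h,
          Finset.erase_insert fun h' => ha (he'.1 h')]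
    have hnew : ∀ e ∈ s.powersetCard 1, ∏ i ∈ insert a e, f i = f a * ∏ i ∈ e, f i :=
      fun e he => Finset.prod_insert fun h => ha ((Finset.mem_powersetCard.1 he).1 h)
    rw [Finset.powersetCard_succ_insert ha, Finset.sum_union hdisj, Finset.sum_image hinj,
      Finset.sum_congr rfl hnew, ← Finset.mul_sum, Finset.powersetCard_one, Finset.sum_map,
      Finset.sum_insert ha, Finset.sum_insert ha]
    simp only [Function.Embedding.coeFn_mk, Finset.prod_singleton]
    linear_combination ih

section LpNorm

variable {V : Type*} [Fintype V] {p : ℝ}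

theorem abs_le_one_of_lpNorm_eq_one (hp : 0 < p) {x : V → ℝ} (hx : lpNorm p x = 1) (i : V) :
    |x i| ≤ 1 := by
  have hsingle : |x i| ^ p ≤ ∑ j, |x j| ^ p :=
    Finset.single_le_sum (fun j _ => Real.rpow_nonneg (abs_nonneg _) _) (Finset.mem_univ i)
  calc |x i| = (|x i| ^ p) ^ (1 / p) := by
        rw [one_div, Real.rpow_rpow_inv (abs_nonneg _) hp.ne']
    _ ≤ lpNorm p x := Real.rpow_le_rpow (Real.rpow_nonneg (abs_nonneg _) _) hsingle (by positivity)
    _ = 1 := hx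

theorem lpNorm_smul (hp : 0 < p) (c : ℝ) (x : V → ℝ) : lpNorm p (c • x) = |c| * lpNorm p x := by
  have hsum : ∑ i, |(c • x) i| ^ p = |c| ^ p * ∑ i, |x i| ^ p := by
    simp only [Pi.smul_apply, smul_eq_mul, abs_mul,
      Real.mul_rpow (abs_nonneg c) (abs_nonneg _), Finset.mul_sum]
  rw [lpNorm, lpNorm, hsum, Real.mul_rpow (by positivity)
      (Finset.sum_nonneg fun i _ => by positivity), ← Real.rpow_mul (abs_nonneg c),
    mul_one_div_cancel hp.ne', Real.rpow_one]

theorem lpNorm_of_abs_eq_one {x : V → ℝ} (hx : ∀ i, |x i| = 1) :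
    lpNorm p x = (Fintype.card V : ℝ) ^ (1 / p) := by
  simp [lpNorm, hx]

end LpNorm

section PolyForm

variable {r : ℕ} {V : Type*} {E : Finset (Finset V)} {w : Finset V → ℝ}

theorem polyForm_smul (hE : ∀ e ∈ E, e.card = r) (c : ℝ) (x : V → ℝ) :
    polyForm r E w (c • x) = c ^ r * polyForm r E w x := by
  simp only [polyForm, Finset.mul_sum]
  refine Finset.sum_congr rfl fun e he => ?_
  rw [Pi.smul_def]
  simp only [smul_eq_mul, Finset.prod_mul_distrib, Finset.prod_const, hE e he]
  ring

variable [Fintype V] {p : ℝ}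

theorem bddBelow_polyForm_lpSphere (hp : 0 < p) (r : ℕ) (E : Finset (Finset V))
    (w : Finset V → ℝ) : BddBelow {t | ∃ x : V → ℝ, lpNorm p x = 1 ∧ polyForm r E w x = t} := by
  refine ⟨-((r.factorial : ℝ) * ∑ e ∈ E, |w e|), ?_⟩
  rintro _ ⟨x, hx, rfl⟩
  have hprod : ∀ e ∈ E, |w e * ∏ i ∈ e, x i| ≤ |w e| := fun e _ => by
    rw [abs_mul, Finset.abs_prod]
    exact mul_le_of_le_one_right (abs_nonneg _)
      (Finset.prod_le_one (fun i _ => abs_nonneg _) fun i _ => abs_le_one_of_lpNorm_eq_one hp hx i)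
  have hsum : |∑ e ∈ E, w e * ∏ i ∈ e, x i| ≤ ∑ e ∈ E, |w e| :=
    (Finset.abs_sum_le_sum_abs _ _).trans (Finset.sum_le_sum hprod)
  rw [polyForm, ← mul_neg]
  exact mul_le_mul_of_nonneg_left ((neg_le_neg hsum).trans (neg_abs_le _)) (Nat.cast_nonneg _)

theorem lamMin_le_polyForm (hp : 0 < p) {x : V → ℝ} (hx : lpNorm p x = 1) :
    lamMin r p E w ≤ polyForm r E w x :=
  csInf_le (bddBelow_polyForm_lpSphere hp r E w) ⟨x, hx, rfl⟩

end PolyForm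

section CrossEdges

variable {n : ℕ}

theorem mem_crossEdges {e : Finset (Fin n ⊕ Fin n)} :
    e ∈ crossEdges n ↔ e.toLeft.card = 2 ∧ e.toRight.card = 2 := by
  have hleft : e.filter (fun v => v.isLeft = true) = e.toLeft.map .inl := by
    ext v
    cases v <;> simp
  have hcard := Finset.card_toLeft_add_card_toRight (u := e)
  rw [crossEdges, Finset.mem_filter, Finset.mem_powersetCard, hleft, Finset.card_map]
  exact ⟨fun ⟨⟨_, h4⟩, h2⟩ => ⟨h2, by omega⟩,
    fun ⟨h2, h2'⟩ => ⟨⟨Finset.subset_univ _, by omega⟩, h2⟩⟩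

theorem card_of_mem_crossEdges {e : Finset (Fin n ⊕ Fin n)} (he : e ∈ crossEdges n) :
    e.card = 4 := by
  rw [← Finset.card_toLeft_add_card_toRight, (mem_crossEdges.1 he).1, (mem_crossEdges.1 he).2]

theorem sum_crossEdges_prod (f : Fin n ⊕ Fin n → ℝ) :
    ∑ e ∈ crossEdges n, ∏ i ∈ e, f i =
      (∑ a ∈ (univ : Finset (Fin n)).powersetCard 2, ∏ i ∈ a, f (.inl i)) *
        ∑ b ∈ (univ : Finset (Fin n)).powersetCard 2, ∏ j ∈ b, f (.inr j) := by
  rw [Finset.sum_mul_sum, ← Finset.sum_product']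
  refine Finset.sum_nbij' (fun e => (e.toLeft, e.toRight)) (fun ab => ab.1.disjSum ab.2)
    (fun e he => ?_) (fun ab hab => ?_) (fun e _ => Finset.toLeft_disjSum_toRight)
    (fun ab _ => by simp) (fun e _ => Finset.prod_sum_eq_prod_toLeft_mul_prod_toRight e f)
  · simpa [Finset.mem_powersetCard] using mem_crossEdges.1 he
  · rw [Finset.mem_product, Finset.mem_powersetCard, Finset.mem_powersetCard] at hab
    simp [mem_crossEdges, hab.1.2, hab.2.2]

theorem sum_powersetCard_two_prod_neg_one_pow (hn : Even n) :
    ∑ b ∈ (univ : Finset (Fin n)).powersetCard 2, ∏ j ∈ b, (-1 : ℝ) ^ (j : ℕ) = -(n / 2) := by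
  have h := Finset.two_mul_sum_powersetCard_two_prod (univ : Finset (Fin n))
    fun j => (-1 : ℝ) ^ (j : ℕ)
  rw [Fin.sum_univ_eq_sum_range (fun j => (-1 : ℝ) ^ j), neg_one_geom_sum, if_pos hn] at h
  have hsq : ∀ j : Fin n, ((-1 : ℝ) ^ (j : ℕ)) ^ 2 = 1 := fun j => by
    rw [pow_right_comm, neg_one_sq, one_pow]
  simp only [hsq, Finset.sum_const, Finset.card_univ, Fintype.card_fin, nsmul_eq_mul, mul_one] at h
  linarith

def crossWitness (n : ℕ) : Fin n ⊕ Fin n → ℝ :=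
  Sum.elim 1 fun j => (-1) ^ (j : ℕ)

theorem abs_crossWitness (v : Fin n ⊕ Fin n) : |crossWitness n v| = 1 := by
  cases v <;> simp [crossWitness]

theorem polyForm_crossWitness (hn : Even n) :
    polyForm 4 (crossEdges n) (fun _ => 1) (crossWitness n) =
      -(12 * (n : ℝ) * ((n : ℝ) * ((n : ℝ) - 1) / 2)) := by
  have hA : ∑ a ∈ (univ : Finset (Fin n)).powersetCard 2, ∏ _i ∈ a, (1 : ℝ) = n * (n - 1) / 2 := by
    simp [Nat.cast_choose_two]
  simp only [polyForm, one_mul, sum_crossEdges_prod, crossWitness, Sum.elim_inl, Sum.elim_inr,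
    Pi.one_apply, hA, sum_powersetCard_two_prod_neg_one_pow hn, Nat.factorial]
  push_cast
  ring

end CrossEdges

/-- Upper-bound part of equation (13) of the paper: for even `n ≥ 2` and real
`p ≥ 2`, the `4`-graph `G` of Section 2 satisfies
`λ_min^(p)(G) ≤ -12·n·C(n,2)/(2n)^{4/p}`. -/
theorem lamMin_crossEdges_le (n : ℕ) (hn : Even n) (h2 : 2 ≤ n) (p : ℝ) (hp : 2 ≤ p) :
    lamMin 4 p (crossEdges n) (fun _ => 1) ≤
      -(12 * (n : ℝ) * ((n : ℝ) * ((n : ℝ) - 1) / 2) / (2 * (n : ℝ)) ^ ((4 : ℝ) / p)) := by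
  have hp0 : 0 < p := by linarith
  have hN : (0 : ℝ) < 2 * n := by norm_cast; omega
  set c := (2 * (n : ℝ)) ^ (-(1 / p))
  have hnorm : lpNorm p (c • crossWitness n) = 1 := by
    rw [lpNorm_smul hp0, lpNorm_of_abs_eq_one abs_crossWitness, Fintype.card_sum,
      Fintype.card_fin, Nat.cast_add, ← two_mul, abs_of_pos (Real.rpow_pos_of_pos hN _),
      ← Real.rpow_add hN, neg_add_cancel, Real.rpow_zero]
  have hc4 : c ^ 4 = ((2 * (n : ℝ)) ^ (4 / p))⁻¹ := by
    rw [← Real.rpow_natCast, ← Real.rpow_mul hN.le, ← Real.rpow_neg hN.le]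
    ring_nf
  calc lamMin 4 p (crossEdges n) (fun _ => 1)
      ≤ polyForm 4 (crossEdges n) (fun _ => 1) (c • crossWitness n) :=
        lamMin_le_polyForm hp0 hnorm
    _ = c ^ 4 * polyForm 4 (crossEdges n) (fun _ => 1) (crossWitness n) :=
        polyForm_smul (fun _ => card_of_mem_crossEdges) c _
    _ = _ := by rw [polyForm_crossWitness hn, hc4]; ring
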